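/- Let Σ be a positive-definite d×d real matrix with positive-definite square root Σ^{1/2}, let μ̄ ∈ ℝ^d be a unit vector (‖μ̄‖ = 1), and set μ = Σ^{1/2} μ̄ and v = Σ^{-1/2} μ̄. Define the Gaussian densities f(x) = (2π)^{-d/2} (det Σ)^{-1/2} exp(−xᵀ Σ⁻¹ x / 2), f_mix(x) = (1/2)·(2π)^{-d/2} (det Σ)^{-1/2} [exp(−(x−μ)ᵀ Σ⁻¹ (x−μ)/2) + exp(−(x+μ)ᵀ Σ⁻¹ (x+μ)/2)], and f̄(x) = (1/2)(f(x) + f_mix(x)). Then for every x ∈ ℝ^d with |xᵀ v| > 3/2, one has f(x) < f̄(x). -/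

import Mathlib

open Matrix Real

/-- Gaussian density on `ℝ^d` with mean `m` and covariance matrix `Sg`. -/
noncomputable def gaussDensity {d : ℕ} (Sg : Matrix (Fin d) (Fin d) ℝ)
    (m x : Fin d → ℝ) : ℝ :=
  (2 * π) ^ (-(d : ℝ) / 2) * Sg.det ^ (-(1 : ℝ) / 2) *
    Real.exp (-((x - m) ⬝ᵥ Sg⁻¹.mulVec (x - m)) / 2)

/-! Completing the square, `f_{±μ}(x) = f(x) · exp(±t − ½)` with `t = xᵀ Σ⁻¹ μ = xᵀ v`
(as `μᵀ Σ⁻¹ μ = ‖μ̄‖² = 1`), so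
`f_mix = f · (e^{t−½} + e^{−t−½}) / 2`. Since `e^{t} + e^{−t} ≥ e^{|t|}`, the factor
`(e^{t−½} + e^{−t−½}) / 2` exceeds `e^{|t|−½} / 2 > e / 2 > 1` once `|t| > 3/2`; hence
`f < f_mix` and so `f < (f + f_mix) / 2`. -/

namespace Matrix

variable {n R : Type*} [Fintype n]

theorem IsSymm.dotProduct_mulVec_comm [CommSemiring R] {A : Matrix n n R} (hA : A.IsSymm)
    (x y : n → R) : y ⬝ᵥ A *ᵥ x = x ⬝ᵥ A *ᵥ y := by
  rw [dotProduct_mulVec, ← mulVec_transpose, hA.eq, dotProduct_comm]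

theorem IsSymm.sub_dotProduct_mulVec_sub [CommRing R] {A : Matrix n n R} (hA : A.IsSymm)
    (x m : n → R) :
    (x - m) ⬝ᵥ A *ᵥ (x - m) = x ⬝ᵥ A *ᵥ x - 2 * (x ⬝ᵥ A *ᵥ m) + m ⬝ᵥ A *ᵥ m := by
  rw [mulVec_sub, sub_dotProduct, dotProduct_sub, dotProduct_sub, hA.dotProduct_mulVec_comm x m]
  ring

variable [DecidableEq n] [CommRing R] {S : Matrix n n R}

theorem mul_self_inv_mulVec_mulVec (hS : IsUnit S.det) (u : n → R) :
    (S * S)⁻¹ *ᵥ (S *ᵥ u) = S⁻¹ *ᵥ u := by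
  rw [mulVec_mulVec, mul_inv_rev, mul_assoc, nonsing_inv_mul S hS, mul_one]

theorem IsSymm.mulVec_dotProduct_inv_mulVec (hSsymm : S.IsSymm) (hS : IsUnit S.det)
    (u : n → R) : S *ᵥ u ⬝ᵥ S⁻¹ *ᵥ u = u ⬝ᵥ u := by
  rw [hSsymm.inv.dotProduct_mulVec_comm, mulVec_mulVec, nonsing_inv_mul S hS, one_mulVec]

end Matrix

section Gaussian

variable {d : ℕ} {Sg : Matrix (Fin d) (Fin d) ℝ}

theorem gaussDensity_pos (hdet : 0 < Sg.det) (m x : Fin d → ℝ) : 0 < gaussDensity Sg m x := by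
  unfold gaussDensity
  have := Real.pi_pos
  positivity

theorem gaussDensity_eq_mul_exp (hSg : Sg.IsSymm) (m x : Fin d → ℝ) :
    gaussDensity Sg m x =
      gaussDensity Sg 0 x * exp (x ⬝ᵥ Sg⁻¹ *ᵥ m - m ⬝ᵥ Sg⁻¹ *ᵥ m / 2) := by
  rw [gaussDensity, gaussDensity, hSg.inv.sub_dotProduct_mulVec_sub, sub_zero,
    mul_assoc _ (exp _), ← exp_add]
  ring_nf

theorem gaussDensity_add_gaussDensity_neg (hSg : Sg.IsSymm) (m x : Fin d → ℝ) :
    gaussDensity Sg m x + gaussDensity Sg (-m) x =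
      gaussDensity Sg 0 x * (exp (x ⬝ᵥ Sg⁻¹ *ᵥ m - m ⬝ᵥ Sg⁻¹ *ᵥ m / 2) +
        exp (-(x ⬝ᵥ Sg⁻¹ *ᵥ m) - m ⬝ᵥ Sg⁻¹ *ᵥ m / 2)) := by
  rw [gaussDensity_eq_mul_exp hSg m, gaussDensity_eq_mul_exp hSg (-m), mulVec_neg,
    dotProduct_neg, neg_dotProduct, dotProduct_neg, neg_neg]
  ring

end Gaussian

theorem two_lt_exp_sub_half_add_exp_neg_sub_half {t : ℝ} (ht : 3 / 2 < |t|) :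
    2 < exp (t - 1 / 2) + exp (-t - 1 / 2) :=
  calc (2 : ℝ) < exp 1 := by linarith [exp_one_gt_d9]
    _ < exp (|t| - 1 / 2) := exp_lt_exp.mpr (by linarith)
    _ = exp (-(1 / 2)) * exp |t| := by rw [← exp_add]; ring_nf
    _ ≤ exp (-(1 / 2)) * (exp t + exp (-t)) := by gcongr; exact exp_abs_le t
    _ = exp (t - 1 / 2) + exp (-t - 1 / 2) := by
      rw [mul_add, ← exp_add, ← exp_add]; ring_nf

theorem stmt_0_general {d : ℕ}
    (Sg S : Matrix (Fin d) (Fin d) ℝ)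
    (hSg : Sg.PosDef) (hS : S.PosDef) (hSS : S * S = Sg)
    (μbar : Fin d → ℝ) (hμbar : μbar ⬝ᵥ μbar = 1)
    (μ v : Fin d → ℝ) (hμ : μ = S.mulVec μbar) (hv : v = (S⁻¹).mulVec μbar)
    (f fmix fbar : (Fin d → ℝ) → ℝ)
    (hf : f = gaussDensity Sg 0)
    (hfmix : fmix = fun x => (1 / 2) * (gaussDensity Sg μ x + gaussDensity Sg (-μ) x))
    (hfbar : fbar = fun x => (1 / 2) * (f x + fmix x)) :
    ∀ x : Fin d → ℝ, |x ⬝ᵥ v| > 3 / 2 → f x < fbar x := by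
  intro x hx
  subst hf hfmix hfbar
  have hSdet : IsUnit S.det := hS.det_pos.ne'.isUnit
  have hSgμ : Sg⁻¹ *ᵥ μ = v := by rw [hμ, hv, ← hSS, mul_self_inv_mulVec_mulVec hSdet]
  have hμSgμ : μ ⬝ᵥ Sg⁻¹ *ᵥ μ = 1 := by
    rw [hSgμ, hμ, hv, IsSymm.mulVec_dotProduct_inv_mulVec (isHermitian_iff_isSymm.mp hS.isHermitian) hSdet, hμbar]
  have hmix := gaussDensity_add_gaussDensity_neg (isHermitian_iff_isSymm.mp hSg.isHermitian) μ x
  rw [hμSgμ, hSgμ] at hmix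
  have hf_pos := gaussDensity_pos hSg.det_pos 0 x
  have hfactor := two_lt_exp_sub_half_add_exp_neg_sub_half hx
  dsimp only
  rw [hmix]
  nlinarith

theorem stmt_0 {d : ℕ} (hd : 1 ≤ d)
    (Sg S : Matrix (Fin d) (Fin d) ℝ)
    (hSg : Sg.PosDef) (hS : S.PosDef) (hSS : S * S = Sg)
    (μbar : Fin d → ℝ) (hμbar : μbar ⬝ᵥ μbar = 1)
    (μ v : Fin d → ℝ) (hμ : μ = S.mulVec μbar) (hv : v = (S⁻¹).mulVec μbar)
    (f fmix fbar : (Fin d → ℝ) → ℝ)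
    (hf : f = gaussDensity Sg 0)
    (hfmix : fmix = fun x => (1 / 2) * (gaussDensity Sg μ x + gaussDensity Sg (-μ) x))
    (hfbar : fbar = fun x => (1 / 2) * (f x + fmix x)) :
    ∀ x : Fin d → ℝ, |x ⬝ᵥ v| > 3 / 2 → f x < fbar x :=
  stmt_0_general Sg S hSg hS hSS μbar hμbar μ v hμ hv f fmix fbar hf hfmix hfbar
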